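/- arXiv:1202.5908 — 2 statements merged into one kernel-verified Lean document; each statement's English description precedes it below -/
import Mathlib

section
/- There exists a constant C, independent of ε and N, such that ‖(E_1 − E_1^I)_x‖_{L^1(Ω_s)} ≤ C N^{1−5/2}, and likewise ‖∇(E_2 − E_2^I)‖_{L^1(Ω_s)} + ‖∇(E_12 − E_12^I)‖_{L^1(Ω_s)} ≤ C N^{1−5/2}, where gradients of the piecewise bilinear interpolants are taken rectangle-by-rectangle. -/
/-!
On `Ω_s` the Shishkin mesh is uniform with cells of side at least `1 / N`, and the transition
parameters (`ρ = 5/2`) are chosen so that every layer function is `O(N^{-5/2})` there. The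
derivatives of the layer functions are integrated exactly against their exponential profiles,
giving `O(N^{-5/2})`. The interpolant is bilinear on each cell, so its gradient is at most `2N`
times its nodal values, i.e. `O(N^{-3/2})`.
-/

open MeasureTheory Real Set

noncomputable section

/-- First-order partial derivative in the x-direction. -/
def pdx (f : ℝ × ℝ → ℝ) : ℝ × ℝ → ℝ := fun p => fderiv ℝ f p (1, 0)

/-- First-order partial derivative in the y-direction. -/
def pdy (f : ℝ × ℝ → ℝ) : ℝ × ℝ → ℝ := fun p => fderiv ℝ f p (0, 1)

/-- Mixed partial derivative `∂_x^i ∂_y^j`. -/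
def pd (i j : ℕ) (f : ℝ × ℝ → ℝ) : ℝ × ℝ → ℝ := pdx^[i] (pdy^[j] f)

/-- A function coincides with a bilinear polynomial `a + bx + cy + dxy` on a set. -/
def IsBilinearOn (f : ℝ × ℝ → ℝ) (s : Set (ℝ × ℝ)) : Prop :=
  ∃ a b c d : ℝ, ∀ p ∈ s, f p = a + b * p.1 + c * p.2 + d * (p.1 * p.2)

/-- The Shishkin-mesh node abscissas. -/
def meshX (N : ℕ) (lx : ℝ) (i : ℕ) : ℝ :=
  if i ≤ N / 2 then 2 * (i : ℝ) * (1 - lx) / (N : ℝ)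
  else 1 - 2 * ((N : ℝ) - (i : ℝ)) * lx / (N : ℝ)

/-- The Shishkin-mesh node ordinates. -/
def meshY (N : ℕ) (ly : ℝ) (j : ℕ) : ℝ :=
  if j ≤ N / 3 then 3 * (j : ℝ) * ly / (N : ℝ)
  else if j ≤ 2 * N / 3 then
    (3 * (j : ℝ) / (N : ℝ) - 1) - 3 * (2 * (j : ℝ) - (N : ℝ)) * ly / (N : ℝ)
  else 1 - 3 * ((N : ℝ) - (j : ℝ)) * ly / (N : ℝ)

/-- The mesh rectangle `τ_{ij} = [x_{i-1}, x_i] × [y_{j-1}, y_j]`. -/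
def meshRect (N : ℕ) (lx ly : ℝ) (i j : ℕ) : Set (ℝ × ℝ) :=
  Icc (meshX N lx (i - 1)) (meshX N lx i) ×ˢ Icc (meshY N ly (j - 1)) (meshY N ly j)

def OmegaS (lx ly : ℝ) : Set (ℝ × ℝ) := Icc 0 (1 - lx) ×ˢ Icc ly (1 - ly)
def Omega1R (lx ly : ℝ) : Set (ℝ × ℝ) := Icc (1 - lx) 1 ×ˢ Icc ly (1 - ly)
def Omega2R (lx ly : ℝ) : Set (ℝ × ℝ) := Icc 0 (1 - lx) ×ˢ (Icc 0 ly ∪ Icc (1 - ly) 1)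
def Omega12R (lx ly : ℝ) : Set (ℝ × ℝ) := Icc (1 - lx) 1 ×ˢ (Icc 0 ly ∪ Icc (1 - ly) 1)

/-- Basic assumptions on the Shishkin mesh data (with `ρ = 2.5`). -/
def ShishkinHyp (N : ℕ) (ε β lx ly : ℝ) : Prop :=
  0 < N ∧ 6 ∣ N ∧ 0 < ε ∧ ε ≤ (N : ℝ)⁻¹ ∧ 0 < β ∧
  lx = 2.5 * ε / β * Real.log (N : ℝ) ∧ ly = 2.5 * Real.sqrt ε * Real.log (N : ℝ) ∧
  lx ≤ 1 / 2 ∧ ly ≤ 1 / 4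

/-- `gI` is the piecewise-bilinear nodal interpolant of `g` on the Shishkin mesh. -/
def IsMeshInterpolant (N : ℕ) (lx ly : ℝ) (g gI : ℝ × ℝ → ℝ) : Prop :=
  Continuous gI ∧
  (∀ i j : ℕ, 1 ≤ i → i ≤ N → 1 ≤ j → j ≤ N → IsBilinearOn gI (meshRect N lx ly i j)) ∧
  (∀ i j : ℕ, i ≤ N → j ≤ N →
    gI (meshX N lx i, meshY N ly j) = g (meshX N lx i, meshY N ly j))

def UnitSq : Set (ℝ × ℝ) := Icc 0 1 ×ˢ Icc 0 1

/-- Bounds on the regular part `S` of the solution decomposition. -/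
def BoundS (C0 : ℝ) (S : ℝ × ℝ → ℝ) : Prop :=
  ContDiff ℝ 3 S ∧ ∀ i j : ℕ, i + j ≤ 3 → ∀ p ∈ UnitSq, |pd i j S p| ≤ C0

/-- Bounds on the exponential-layer part `E₁`. -/
def BoundE1 (ε β C0 : ℝ) (E1 : ℝ × ℝ → ℝ) : Prop :=
  ContDiff ℝ 3 E1 ∧ ∀ i j : ℕ, i + j ≤ 3 → ∀ p ∈ UnitSq,
    |pd i j E1 p| ≤ C0 * ε ^ (-(i : ℝ)) * Real.exp (-β * (1 - p.1) / ε)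

/-- Bounds on the characteristic-layer part `E₂`. -/
def BoundE2 (ε C0 : ℝ) (E2 : ℝ × ℝ → ℝ) : Prop :=
  ContDiff ℝ 3 E2 ∧ ∀ i j : ℕ, i + j ≤ 3 → ∀ p ∈ UnitSq,
    |pd i j E2 p| ≤ C0 * ε ^ (-(j : ℝ) / 2) *
      (Real.exp (-p.2 / Real.sqrt ε) + Real.exp (-(1 - p.2) / Real.sqrt ε))

/-- Bounds on the corner-layer part `E₁₂`. -/
def BoundE12 (ε β C0 : ℝ) (E12 : ℝ × ℝ → ℝ) : Prop :=
  ContDiff ℝ 3 E12 ∧ ∀ i j : ℕ, i + j ≤ 3 → ∀ p ∈ UnitSq,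
    |pd i j E12 p| ≤ C0 * ε ^ (-((i : ℝ) + (j : ℝ) / 2)) * Real.exp (-β * (1 - p.1) / ε) *
      (Real.exp (-p.2 / Real.sqrt ε) + Real.exp (-(1 - p.2) / Real.sqrt ε))

/-- Membership in the bilinear finite element space `V^N`. -/
def MemVN (N : ℕ) (lx ly : ℝ) (v : ℝ × ℝ → ℝ) : Prop :=
  Continuous v ∧
  (∀ p ∈ UnitSq, (p.1 = 0 ∨ p.1 = 1 ∨ p.2 = 0 ∨ p.2 = 1) → v p = 0) ∧
  ∀ i j : ℕ, 1 ≤ i → i ≤ N → 1 ≤ j → j ≤ N → IsBilinearOn v (meshRect N lx ly i j)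

/-- The SDFEM stabilization parameter `δ`. -/
def sdDelta (N : ℕ) (lx ly Cstar : ℝ) : ℝ × ℝ → ℝ :=
  (OmegaS lx ly ∪ Omega2R lx ly).indicator fun _ => Cstar / (N : ℝ)

/-- The SDFEM bilinear form `B`. -/
def Bform (N : ℕ) (lx ly ε b c Cstar : ℝ) (v w : ℝ × ℝ → ℝ) : ℝ :=
  ∫ p in UnitSq,
    (ε * (pdx v p * pdx w p + pdy v p * pdy w p)
      + (b * pdx v p + c * v p) * w p
      + (b * pdx v p + c * v p) * (sdDelta N lx ly Cstar p * (b * pdx w p)))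

/-- The square of the SDFEM energy norm `|||·|||`. -/
def energySq (N : ℕ) (lx ly ε b c Cstar : ℝ) (v : ℝ × ℝ → ℝ) : ℝ :=
  ∫ p in UnitSq,
    ((ε + b ^ 2 * sdDelta N lx ly Cstar p) * pdx v p ^ 2
      + ε * pdy v p ^ 2 + c * v p ^ 2)

/-- The neighbourhood `Ω₀` of the point `(xs, ys)`. -/
def OmegaZero (N : ℕ) (xs ys K sx sy : ℝ) : Set (ℝ × ℝ) :=
  {p : ℝ × ℝ | p ∈ Ioo (0 : ℝ) 1 ×ˢ Ioo (0 : ℝ) 1 ∧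
    p.1 - xs ≤ K * sx * Real.log (N : ℝ) ∧ |p.2 - ys| ≤ K * sy * Real.log (N : ℝ)}

/-- `Ω₀'`: the smallest union of mesh rectangles containing `Ω₀`. -/
def OmegaZero' (N : ℕ) (lx ly xs ys K sx sy : ℝ) : Set (ℝ × ℝ) :=
  ⋃ i ∈ Finset.Icc 1 N, ⋃ j ∈ Finset.Icc 1 N,
    ⋃ (_ : volume (OmegaZero N xs ys K sx sy ∩ meshRect N lx ly i j) ≠ 0),
      meshRect N lx ly i j

open Topology Filter

theorem pdx_fun_sub {f g : ℝ × ℝ → ℝ} {p : ℝ × ℝ} (hf : DifferentiableAt ℝ f p)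
    (hg : DifferentiableAt ℝ g p) : pdx (fun q => f q - g q) p = pdx f p - pdx g p := by
  simp [pdx, fderiv_fun_sub hf hg]

theorem pdy_fun_sub {f g : ℝ × ℝ → ℝ} {p : ℝ × ℝ} (hf : DifferentiableAt ℝ f p)
    (hg : DifferentiableAt ℝ g p) : pdy (fun q => f q - g q) p = pdy f p - pdy g p := by
  simp [pdy, fderiv_fun_sub hf hg]

theorem differentiableAt_pdx_pdy_of_eventuallyEq_bilinear {v : ℝ × ℝ → ℝ} {p : ℝ × ℝ}
    {a b c d : ℝ} (hv : v =ᶠ[𝓝 p] fun q => a + b * q.1 + c * q.2 + d * (q.1 * q.2)) :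
    DifferentiableAt ℝ v p ∧ pdx v p = b + d * p.2 ∧ pdy v p = c + d * p.1 := by
  have hprod : HasFDerivAt (fun q : ℝ × ℝ => q.1 * q.2)
      (p.1 • ContinuousLinearMap.snd ℝ ℝ ℝ + p.2 • ContinuousLinearMap.fst ℝ ℝ ℝ) p :=
    hasFDerivAt_fst.mul hasFDerivAt_snd
  have hderiv : HasFDerivAt (fun q : ℝ × ℝ => a + b * q.1 + c * q.2 + d * (q.1 * q.2))
      ((0 : ℝ × ℝ →L[ℝ] ℝ) + b • ContinuousLinearMap.fst ℝ ℝ ℝ + c • ContinuousLinearMap.snd ℝ ℝ ℝ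
        + d • (p.1 • ContinuousLinearMap.snd ℝ ℝ ℝ + p.2 • ContinuousLinearMap.fst ℝ ℝ ℝ)) p :=
    (((hasFDerivAt_const a p).add (hasFDerivAt_fst.const_mul b)).add
    (hasFDerivAt_snd.const_mul c)).add (hprod.const_mul d)
  refine ⟨hv.differentiableAt_iff.2 hderiv.differentiableAt, ?_, ?_⟩ <;>
    simp [pdx, pdy, hv.fderiv_eq, hderiv.fderiv]

theorem abs_add_mul_le_of_mem_Icc {b d y0 y1 y K : ℝ} (hy : y ∈ Icc y0 y1)
    (h0 : |b + d * y0| ≤ K) (h1 : |b + d * y1| ≤ K) : |b + d * y| ≤ K := by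
  rcases le_total 0 d with hd | hd
  · exact (abs_le_max_abs_abs (by nlinarith [hy.1]) (by nlinarith [hy.2])).trans (max_le h0 h1)
  · exact (abs_le_max_abs_abs (by nlinarith [hy.2]) (by nlinarith [hy.1])).trans (max_le h1 h0)

theorem abs_sub_div_le {u0 u1 h M : ℝ} (hh : 0 < h) (h0 : |u0| ≤ M) (h1 : |u1| ≤ M) :
    |(u1 - u0) / h| ≤ 2 * M / h := by
  rw [abs_div, abs_of_pos hh]
  gcongr
  linarith [abs_sub u1 u0]

/-- Each partial derivative of a bilinear function is affine in the other variable, hence bounded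
by its values on two opposite edges, which are difference quotients of corner values. -/
theorem IsBilinearOn.abs_pdx_pdy_le {v : ℝ × ℝ → ℝ} {x0 x1 y0 y1 M : ℝ}
    (hv : IsBilinearOn v (Icc x0 x1 ×ˢ Icc y0 y1))
    (hM : ∀ x ∈ ({x0, x1} : Set ℝ), ∀ y ∈ ({y0, y1} : Set ℝ), |v (x, y)| ≤ M)
    {p : ℝ × ℝ} (hp : p ∈ Ioo x0 x1 ×ˢ Ioo y0 y1) :
    DifferentiableAt ℝ v p ∧ |pdx v p| ≤ 2 * M / (x1 - x0) ∧ |pdy v p| ≤ 2 * M / (y1 - y0) := by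
  obtain ⟨a, b, c, d, hv⟩ := hv
  obtain ⟨⟨hpx0, hpx1⟩, hpy0, hpy1⟩ := hp
  have hx : 0 < x1 - x0 := by linarith
  have hy : 0 < y1 - y0 := by linarith
  have hnhds : Icc x0 x1 ×ˢ Icc y0 y1 ∈ 𝓝 p :=
    prod_mem_nhds (Icc_mem_nhds hpx0 hpx1) (Icc_mem_nhds hpy0 hpy1)
  obtain ⟨hdiff, hpdx, hpdy⟩ :=
    differentiableAt_pdx_pdy_of_eventuallyEq_bilinear (eventually_of_mem hnhds hv)
  have hcorner : ∀ x ∈ ({x0, x1} : Set ℝ), ∀ y ∈ ({y0, y1} : Set ℝ),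
      v (x, y) = a + b * x + c * y + d * (x * y) := by
    rintro x (rfl | rfl) y (rfl | rfl) <;> apply hv <;> constructor <;> constructor <;> linarith
  have hslope_x : ∀ y ∈ ({y0, y1} : Set ℝ), |b + d * y| ≤ 2 * M / (x1 - x0) := by
    intro y hy'
    have := abs_sub_div_le hx (hM x0 (by simp) y hy') (hM x1 (by simp) y hy')
    rwa [hcorner x0 (by simp) y hy', hcorner x1 (by simp) y hy',
      show a + b * x1 + c * y + d * (x1 * y) - (a + b * x0 + c * y + d * (x0 * y))
        = (b + d * y) * (x1 - x0) by ring, mul_div_cancel_right₀ _ hx.ne'] at this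
  have hslope_y : ∀ x ∈ ({x0, x1} : Set ℝ), |c + d * x| ≤ 2 * M / (y1 - y0) := by
    intro x hx'
    have := abs_sub_div_le hy (hM x hx' y0 (by simp)) (hM x hx' y1 (by simp))
    rwa [hcorner x hx' y0 (by simp), hcorner x hx' y1 (by simp),
      show a + b * x + c * y1 + d * (x * y1) - (a + b * x + c * y0 + d * (x * y0))
        = (c + d * x) * (y1 - y0) by ring, mul_div_cancel_right₀ _ hy.ne'] at this
  refine ⟨hdiff, ?_, ?_⟩
  · rw [hpdx]
    exact abs_add_mul_le_of_mem_Icc ⟨hpy0.le, hpy1.le⟩ (hslope_x y0 (by simp))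
      (hslope_x y1 (by simp))
  · rw [hpdy]
    exact abs_add_mul_le_of_mem_Icc ⟨hpx0.le, hpx1.le⟩ (hslope_y x0 (by simp))
      (hslope_y x1 (by simp))

theorem exists_mem_Ioo_of_notMem_range {a : ℕ → ℝ} {t : ℝ} (h0 : a 0 ≤ t) (ht : t ∉ range a) :
    ∀ {n : ℕ}, t ≤ a n → ∃ i < n, t ∈ Ioo (a i) (a (i + 1))
  | 0, hn => absurd (le_antisymm hn h0 ▸ mem_range_self 0) ht
  | n + 1, hn => by
    by_cases htn : t ≤ a n
    · obtain ⟨i, hi, hti⟩ := exists_mem_Ioo_of_notMem_range h0 ht htn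
      exact ⟨i, by omega, hti⟩
    · exact ⟨n, by omega, not_le.1 htn,
        lt_of_le_of_ne hn fun h => ht (h ▸ mem_range_self (n + 1))⟩

theorem ae_fst_notMem_of_countable {S : Set ℝ} (hS : S.Countable) : ∀ᵐ p : ℝ × ℝ, p.1 ∉ S := by
  rw [Measure.volume_eq_prod]
  exact Measure.quasiMeasurePreserving_fst.ae (hS.ae_notMem volume)

theorem ae_snd_notMem_of_countable {S : Set ℝ} (hS : S.Countable) : ∀ᵐ p : ℝ × ℝ, p.2 ∉ S := by
  rw [Measure.volume_eq_prod]
  exact Measure.quasiMeasurePreserving_snd.ae (hS.ae_notMem volume)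

theorem ae_exists_mem_Ioo_prod_Ioo (a b : ℕ → ℝ) (n n' : ℕ) :
    ∀ᵐ p ∂volume.restrict (Icc (a 0) (a n) ×ˢ Icc (b 0) (b n')),
      ∃ i < n, ∃ k < n', p ∈ Ioo (a i) (a (i + 1)) ×ˢ Ioo (b k) (b (k + 1)) := by
  filter_upwards [ae_restrict_mem (measurableSet_Icc.prod measurableSet_Icc),
    ae_restrict_of_ae (ae_fst_notMem_of_countable (countable_range a)),
    ae_restrict_of_ae (ae_snd_notMem_of_countable (countable_range b))]
    with p ⟨hpx, hpy⟩ hpa hpb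
  obtain ⟨i, hi, hpi⟩ := exists_mem_Ioo_of_notMem_range hpx.1 hpa hpx.2
  obtain ⟨k, hk, hpk⟩ := exists_mem_Ioo_of_notMem_range hpy.1 hpb hpy.2
  exact ⟨i, hi, k, hk, hpi, hpk⟩

section ShishkinMesh

variable {m : ℕ} {lx ly : ℝ}

theorem meshX_eq_of_le (hm : 0 < m) {i : ℕ} (hi : i ≤ 3 * m) :
    meshX (6 * m) lx i = i * ((1 - lx) / (3 * m)) := by
  have hm' : (m : ℝ) ≠ 0 := by positivity
  rw [meshX, if_pos (by omega)]
  push_cast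
  field_simp
  ring

theorem meshY_add_eq (hm : 0 < m) {k : ℕ} (hk : k ≤ 2 * m) :
    meshY (6 * m) ly (2 * m + k) = ly + k * ((1 - 2 * ly) / (2 * m)) := by
  have hm' : (m : ℝ) ≠ 0 := by positivity
  rcases Nat.eq_zero_or_pos k with rfl | hk0
  · rw [meshY, if_pos (by omega)]
    push_cast
    field_simp
    ring
  · rw [meshY, if_neg (by omega), if_pos (by omega)]
    push_cast
    field_simp
    ring

theorem OmegaS_eq_Icc_prod_Icc_mesh (hm : 0 < m) :
    OmegaS lx ly = Icc (meshX (6 * m) lx 0) (meshX (6 * m) lx (3 * m)) ×ˢ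
      Icc (meshY (6 * m) ly (2 * m + 0)) (meshY (6 * m) ly (2 * m + 2 * m)) := by
  have hm' : (m : ℝ) ≠ 0 := by positivity
  rw [meshX_eq_of_le hm (by omega), meshX_eq_of_le hm le_rfl, meshY_add_eq hm (by omega),
    meshY_add_eq hm le_rfl, OmegaS]
  congr 2 <;> push_cast <;> field_simp <;> ring

theorem meshX_mem_Icc (hm : 0 < m) (hlx : lx ≤ 1) {i : ℕ} (hi : i ≤ 3 * m) :
    meshX (6 * m) lx i ∈ Icc 0 (1 - lx) := by
  have hiR : (i : ℝ) ≤ 3 * m := by exact_mod_cast hi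
  have : 0 ≤ 1 - lx := by linarith
  rw [meshX_eq_of_le hm hi, mul_div_assoc']
  exact ⟨by positivity, by rw [div_le_iff₀ (by positivity)]; nlinarith⟩

theorem meshY_add_mem_Icc (hm : 0 < m) (hly : ly ≤ 1 / 2) {k : ℕ} (hk : k ≤ 2 * m) :
    meshY (6 * m) ly (2 * m + k) ∈ Icc ly (1 - ly) := by
  have hkR : (k : ℝ) ≤ 2 * m := by exact_mod_cast hk
  have : 0 ≤ 1 - 2 * ly := by linarith
  have h0 : 0 ≤ k * (1 - 2 * ly) / (2 * m) := by positivity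
  have h1 : k * (1 - 2 * ly) / (2 * m) ≤ 1 - 2 * ly := by
    rw [div_le_iff₀ (by positivity)]; nlinarith
  rw [meshY_add_eq hm hk, mul_div_assoc']
  exact ⟨by linarith, by linarith⟩

theorem one_le_mul_meshX_succ_sub (hm : 0 < m) (hlx : lx ≤ 1 / 2) {i : ℕ} (hi : i < 3 * m) :
    1 ≤ ((6 * m : ℕ) : ℝ) * (meshX (6 * m) lx (i + 1) - meshX (6 * m) lx i) := by
  rw [meshX_eq_of_le hm hi, meshX_eq_of_le hm hi.le]
  have hm' : (m : ℝ) ≠ 0 := by positivity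
  push_cast
  field_simp
  linarith

theorem one_le_mul_meshY_succ_sub (hm : 0 < m) (hly : ly ≤ 1 / 4) {k : ℕ} (hk : k < 2 * m) :
    1 ≤ ((6 * m : ℕ) : ℝ) *
      (meshY (6 * m) ly (2 * m + (k + 1)) - meshY (6 * m) ly (2 * m + k)) := by
  rw [meshY_add_eq hm hk, meshY_add_eq hm hk.le]
  have hm' : (m : ℝ) ≠ 0 := by positivity
  push_cast
  field_simp
  linarith

/-- On `Ω_s` the mesh cells have both sides at least `1 / N`. -/
theorem IsMeshInterpolant.ae_abs_pdx_pdy_le {N : ℕ} (hN : 0 < N) (h6 : 6 ∣ N)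
    (hlx : lx ≤ 1 / 2) (hly : ly ≤ 1 / 4) {g gI : ℝ × ℝ → ℝ} {M : ℝ}
    (hI : IsMeshInterpolant N lx ly g gI) (hg : ∀ q ∈ OmegaS lx ly, |g q| ≤ M) :
    ∀ᵐ p ∂volume.restrict (OmegaS lx ly),
      DifferentiableAt ℝ gI p ∧ |pdx gI p| ≤ 2 * M * N ∧ |pdy gI p| ≤ 2 * M * N := by
  obtain ⟨m, rfl⟩ := h6
  have hm : 0 < m := by omega
  rw [OmegaS_eq_Icc_prod_Icc_mesh hm]
  filter_upwards [ae_exists_mem_Ioo_prod_Ioo (meshX (6 * m) lx)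
    (fun k => meshY (6 * m) ly (2 * m + k)) (3 * m) (2 * m)] with p ⟨i, hi, k, hk, hp⟩
  have hbil : IsBilinearOn gI (Icc (meshX (6 * m) lx i) (meshX (6 * m) lx (i + 1)) ×ˢ
      Icc (meshY (6 * m) ly (2 * m + k)) (meshY (6 * m) ly (2 * m + (k + 1)))) :=
    hI.2.1 (i + 1) (2 * m + (k + 1)) (by omega) (by omega) (by omega) (by omega)
  have hcorner : ∀ x ∈ ({meshX (6 * m) lx i, meshX (6 * m) lx (i + 1)} : Set ℝ),
      ∀ y ∈ ({meshY (6 * m) ly (2 * m + k), meshY (6 * m) ly (2 * m + (k + 1))} : Set ℝ),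
        |gI (x, y)| ≤ M := by
    rintro x (rfl | rfl) y (rfl | rfl) <;> rw [hI.2.2 _ _ (by omega) (by omega)] <;>
      exact hg _ ⟨meshX_mem_Icc hm (by linarith) (by omega),
        meshY_add_mem_Icc hm (by linarith) (by omega)⟩
  have hM : 0 ≤ M := (abs_nonneg _).trans (hcorner _ (mem_insert _ _) _ (mem_insert _ _))
  obtain ⟨hdiff, hdx, hdy⟩ := hbil.abs_pdx_pdy_le hcorner hp
  have hwx := one_le_mul_meshX_succ_sub hm hlx hi
  have hwy := one_le_mul_meshY_succ_sub hm hly hk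
  refine ⟨hdiff, hdx.trans (div_le_of_le_mul₀ ?_ (by positivity) (by nlinarith)),
    hdy.trans (div_le_of_le_mul₀ ?_ (by positivity) (by nlinarith))⟩ <;>
    nlinarith [hwx, hwy, (Nat.cast_nonneg (6 * m) : (0 : ℝ) ≤ ((6 * m : ℕ) : ℝ))]

end ShishkinMesh

section RectangleIntegral

variable {a₁ b₁ a₂ b₂ : ℝ}

theorem setIntegral_Icc_prod_fst_le (h₂ : a₂ ≤ b₂) (hw₂ : b₂ - a₂ ≤ 1) {u : ℝ → ℝ}
    (hu0 : ∀ x, 0 ≤ u x) :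
    ∫ p in Icc a₁ b₁ ×ˢ Icc a₂ b₂, u p.1 ≤ ∫ x in Icc a₁ b₁, u x := by
  have h := setIntegral_prod_mul (μ := volume) (ν := volume) u (fun _ => (1 : ℝ))
    (Icc a₁ b₁) (Icc a₂ b₂)
  simp only [mul_one, setIntegral_const, volume_real_Icc_of_le h₂, smul_eq_mul] at h
  rw [Measure.volume_eq_prod, h]
  exact mul_le_of_le_one_right (setIntegral_nonneg measurableSet_Icc fun x _ => hu0 x) hw₂

theorem setIntegral_Icc_prod_snd_le (h₁ : a₁ ≤ b₁) (hw₁ : b₁ - a₁ ≤ 1) {w : ℝ → ℝ}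
    (hw0 : ∀ y, 0 ≤ w y) :
    ∫ p in Icc a₁ b₁ ×ˢ Icc a₂ b₂, w p.2 ≤ ∫ y in Icc a₂ b₂, w y := by
  have h := setIntegral_prod_mul (μ := volume) (ν := volume) (fun _ => (1 : ℝ)) w
    (Icc a₁ b₁) (Icc a₂ b₂)
  simp only [one_mul, mul_one, setIntegral_const, volume_real_Icc_of_le h₁, smul_eq_mul] at h
  rw [Measure.volume_eq_prod, h]
  exact mul_le_of_le_one_left (setIntegral_nonneg measurableSet_Icc fun y _ => hw0 y) hw₁

theorem setIntegral_Icc_prod_le (h₁ : a₁ ≤ b₁) (h₂ : a₂ ≤ b₂) (hw₁ : b₁ - a₁ ≤ 1)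
    (hw₂ : b₂ - a₂ ≤ 1) {u w : ℝ → ℝ} {K : ℝ} (hu : Continuous u) (hw : Continuous w)
    (hu0 : ∀ x, 0 ≤ u x) (hw0 : ∀ y, 0 ≤ w y) (hK : 0 ≤ K) {G : ℝ × ℝ → ℝ} (hG0 : ∀ p, 0 ≤ G p)
    (hG : ∀ᵐ p ∂volume.restrict (Icc a₁ b₁ ×ˢ Icc a₂ b₂), G p ≤ u p.1 + w p.2 + K) :
    ∫ p in Icc a₁ b₁ ×ˢ Icc a₂ b₂, G p ≤
      (∫ x in Icc a₁ b₁, u x) + (∫ y in Icc a₂ b₂, w y) + K := by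
  have hcompact : IsCompact (Icc a₁ b₁ ×ˢ Icc a₂ b₂) := isCompact_Icc.prod isCompact_Icc
  have hint : ∀ f : ℝ × ℝ → ℝ, Continuous f → IntegrableOn f (Icc a₁ b₁ ×ˢ Icc a₂ b₂) :=
    fun f hf => hf.continuousOn.integrableOn_compact hcompact
  have hconst : ∫ _ in Icc a₁ b₁ ×ˢ Icc a₂ b₂, K ≤ K := by
    rw [setIntegral_const, Measure.volume_eq_prod, measureReal_prod_prod,
      volume_real_Icc_of_le h₁, volume_real_Icc_of_le h₂, smul_eq_mul]
    exact mul_le_of_le_one_left hK (mul_le_one₀ hw₁ (by linarith) hw₂)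
  calc ∫ p in Icc a₁ b₁ ×ˢ Icc a₂ b₂, G p
      ≤ ∫ p in Icc a₁ b₁ ×ˢ Icc a₂ b₂, (u p.1 + w p.2 + K) :=
        integral_mono_of_nonneg (Eventually.of_forall hG0) (hint _ (by fun_prop)) hG
    _ = (∫ p in Icc a₁ b₁ ×ˢ Icc a₂ b₂, u p.1) + (∫ p in Icc a₁ b₁ ×ˢ Icc a₂ b₂, w p.2)
          + ∫ _ in Icc a₁ b₁ ×ˢ Icc a₂ b₂, K := by
        rw [integral_add (hint (fun p => u p.1 + w p.2) (by fun_prop)) (hint _ continuous_const),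
          integral_add (hint (fun p => u p.1) (by fun_prop)) (hint (fun p => w p.2) (by fun_prop))]
    _ ≤ _ := by
        gcongr
        exacts [setIntegral_Icc_prod_fst_le h₂ hw₂ hu0, setIntegral_Icc_prod_snd_le h₁ hw₁ hw0]

end RectangleIntegral

def layerX (β ε x : ℝ) : ℝ := exp (-β * (1 - x) / ε)

def layerY (ε y : ℝ) : ℝ := exp (-y / √ε) + exp (-(1 - y) / √ε)

theorem layerX_pos (β ε x : ℝ) : 0 < layerX β ε x := exp_pos _

theorem layerY_pos (ε y : ℝ) : 0 < layerY ε y := by unfold layerY; positivity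

@[fun_prop]
theorem continuous_layerX (β ε : ℝ) : Continuous (layerX β ε) := by unfold layerX; fun_prop

@[fun_prop]
theorem continuous_layerY (ε : ℝ) : Continuous (layerY ε) := by unfold layerY; fun_prop

theorem layerX_le_one {β ε x : ℝ} (hβ : 0 ≤ β) (hε : 0 ≤ ε) (hx : x ≤ 1) : layerX β ε x ≤ 1 :=
  exp_le_one_iff.2 (div_nonpos_of_nonpos_of_nonneg (by nlinarith) hε)

theorem layerY_le_two {ε y : ℝ} (hy : y ∈ Icc 0 1) : layerY ε y ≤ 2 := by
  have h0 : exp (-y / √ε) ≤ 1 :=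
    exp_le_one_iff.2 (div_nonpos_of_nonpos_of_nonneg (by linarith [hy.1]) (sqrt_nonneg ε))
  have h1 : exp (-(1 - y) / √ε) ≤ 1 :=
    exp_le_one_iff.2 (div_nonpos_of_nonpos_of_nonneg (by linarith [hy.2]) (sqrt_nonneg ε))
  unfold layerY
  linarith

theorem integral_inv_mul_layerX_le {β ε a b : ℝ} (hβ : 0 < β) (hab : a ≤ b) :
    ∫ x in Icc a b, ε⁻¹ * layerX β ε x ≤ β⁻¹ * layerX β ε b := by
  have hderiv : ∀ x ∈ uIcc a b,
      HasDerivAt (fun x => β⁻¹ * layerX β ε x) (ε⁻¹ * layerX β ε x) x := by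
    intro x _
    refine (((((hasDerivAt_id x).const_sub 1).const_mul (-β)).div_const ε).exp.const_mul
      β⁻¹).congr_deriv ?_
    calc β⁻¹ * (layerX β ε x * (-β * -1 / ε)) = (β⁻¹ * β) * (ε⁻¹ * layerX β ε x) := by ring
      _ = ε⁻¹ * layerX β ε x := by rw [inv_mul_cancel₀ hβ.ne', one_mul]
  rw [integral_Icc_eq_integral_Ioc, ← intervalIntegral.integral_of_le hab,
    intervalIntegral.integral_eq_sub_of_hasDerivAt hderiv
      ((continuous_const.mul (continuous_layerX β ε)).intervalIntegrable a b)]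
  linarith [mul_pos (inv_pos.2 hβ) (layerX_pos β ε a)]

theorem integral_inv_sqrt_mul_layerY_le {ε a b : ℝ} (hab : a ≤ b) :
    ∫ y in Icc a b, (√ε)⁻¹ * layerY ε y ≤ exp (-a / √ε) + exp (-(1 - b) / √ε) := by
  have hderiv : ∀ y ∈ uIcc a b, HasDerivAt (fun y => exp (-(1 - y) / √ε) - exp (-y / √ε))
      ((√ε)⁻¹ * layerY ε y) y := by
    intro y _
    refine (((((hasDerivAt_id y).const_sub 1).neg.div_const √ε).exp).sub
      (((hasDerivAt_id y).neg.div_const √ε).exp)).congr_deriv ?_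
    simp only [layerY, Pi.neg_apply, id]
    ring
  rw [integral_Icc_eq_integral_Ioc, ← intervalIntegral.integral_of_le hab,
    intervalIntegral.integral_eq_sub_of_hasDerivAt hderiv
      ((continuous_const.mul (continuous_layerY ε)).intervalIntegrable a b)]
  linarith [exp_pos (-b / √ε), exp_pos (-(1 - a) / √ε)]

namespace ShishkinHyp

variable {N : ℕ} {ε β lx ly : ℝ}

theorem log_nonneg (h : ShishkinHyp N ε β lx ly) : 0 ≤ log N :=
  Real.log_nonneg (by exact_mod_cast h.1)

theorem lx_nonneg (h : ShishkinHyp N ε β lx ly) : 0 ≤ lx := by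
  have ⟨_, _, hε, _, hβ, hlx, _⟩ := h
  rw [hlx]
  exact mul_nonneg (by positivity) h.log_nonneg

theorem ly_nonneg (h : ShishkinHyp N ε β lx ly) : 0 ≤ ly := by
  have ⟨_, _, _, _, _, _, hly, _⟩ := h
  rw [hly]
  exact mul_nonneg (by positivity) h.log_nonneg

theorem OmegaS_subset_unitSq (h : ShishkinHyp N ε β lx ly) : OmegaS lx ly ⊆ UnitSq := by
  rintro p ⟨⟨hx0, hx1⟩, hy0, hy1⟩
  have := h.lx_nonneg
  have := h.ly_nonneg
  exact ⟨⟨hx0, by linarith⟩, by linarith, by linarith⟩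

theorem layerX_one_sub_lx (h : ShishkinHyp N ε β lx ly) :
    layerX β ε (1 - lx) = (N : ℝ) ^ (-(5 / 2) : ℝ) := by
  obtain ⟨hN, -, hε, -, hβ, hlx, -⟩ := h
  rw [layerX, rpow_def_of_pos (by exact_mod_cast hN), hlx]
  congr 1
  field_simp
  norm_num
  ring

theorem exp_neg_ly (h : ShishkinHyp N ε β lx ly) :
    exp (-ly / √ε) = (N : ℝ) ^ (-(5 / 2) : ℝ) := by
  obtain ⟨hN, -, hε, -, -, -, hly, -⟩ := h
  have hsε : √ε ≠ 0 := (sqrt_pos.2 hε).ne'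
  rw [rpow_def_of_pos (by exact_mod_cast hN), hly]
  congr 1
  field_simp
  norm_num
  ring

theorem layerX_le (h : ShishkinHyp N ε β lx ly) {x : ℝ} (hx : x ≤ 1 - lx) :
    layerX β ε x ≤ (N : ℝ) ^ (-(5 / 2) : ℝ) := by
  have ⟨_, _, hε, _, hβ, _⟩ := h
  rw [← h.layerX_one_sub_lx, layerX, layerX]
  refine exp_le_exp.2 (div_le_div_of_nonneg_right ?_ hε.le)
  nlinarith

theorem layerY_le (h : ShishkinHyp N ε β lx ly) {y : ℝ} (hy : y ∈ Icc ly (1 - ly)) :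
    layerY ε y ≤ 2 * (N : ℝ) ^ (-(5 / 2) : ℝ) := by
  have hsε : 0 ≤ √ε := sqrt_nonneg ε
  have h0 : exp (-y / √ε) ≤ exp (-ly / √ε) := by gcongr; linarith [hy.1]
  have h1 : exp (-(1 - y) / √ε) ≤ exp (-ly / √ε) := by gcongr; linarith [hy.2]
  rw [layerY]
  linarith [h.exp_neg_ly]

theorem integral_layerX_le (h : ShishkinHyp N ε β lx ly) :
    ∫ x in Icc 0 (1 - lx), ε⁻¹ * layerX β ε x ≤ β⁻¹ * (N : ℝ) ^ (-(5 / 2) : ℝ) := by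
  have ⟨_, _, _, _, hβ, _, _, hlx, _⟩ := h
  rw [← h.layerX_one_sub_lx]
  exact integral_inv_mul_layerX_le hβ (by linarith)

theorem integral_layerY_le (h : ShishkinHyp N ε β lx ly) :
    ∫ y in Icc ly (1 - ly), (√ε)⁻¹ * layerY ε y ≤ 2 * (N : ℝ) ^ (-(5 / 2) : ℝ) := by
  have ⟨_, _, _, _, _, _, _, _, hly⟩ := h
  have := integral_inv_sqrt_mul_layerY_le (ε := ε) (by linarith : ly ≤ 1 - ly)
  rw [sub_sub_cancel, h.exp_neg_ly] at this
  linarith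

theorem rpow_neg_five_halves_le (h : ShishkinHyp N ε β lx ly) :
    (N : ℝ) ^ (-(5 / 2) : ℝ) ≤ (N : ℝ) ^ ((1 : ℝ) - 5 / 2) :=
  rpow_le_rpow_of_exponent_le (by exact_mod_cast h.1) (by norm_num)

theorem rpow_neg_five_halves_mul_self (h : ShishkinHyp N ε β lx ly) :
    (N : ℝ) ^ (-(5 / 2) : ℝ) * N = (N : ℝ) ^ ((1 : ℝ) - 5 / 2) := by
  rw [sub_eq_neg_add, rpow_add (by exact_mod_cast h.1), rpow_one, mul_comm]

end ShishkinHyp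

section LayerBounds

variable {ε β C0 : ℝ} {E : ℝ × ℝ → ℝ} {p : ℝ × ℝ}

theorem BoundE1.abs_le (hE : BoundE1 ε β C0 E) (hp : p ∈ UnitSq) :
    |E p| ≤ C0 * layerX β ε p.1 := by
  simpa [pd, layerX] using hE.2 0 0 (by norm_num) p hp

theorem BoundE1.abs_pdx_le (hE : BoundE1 ε β C0 E) (hp : p ∈ UnitSq) :
    |pdx E p| ≤ C0 * (ε⁻¹ * layerX β ε p.1) := by
  simpa [pd, layerX, mul_assoc, rpow_neg_one] using hE.2 1 0 (by norm_num) p hp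

theorem BoundE2.abs_le (hE : BoundE2 ε C0 E) (hp : p ∈ UnitSq) : |E p| ≤ C0 * layerY ε p.2 := by
  simpa [pd, layerY] using hE.2 0 0 (by norm_num) p hp

theorem BoundE2.abs_pdx_le (hE : BoundE2 ε C0 E) (hp : p ∈ UnitSq) :
    |pdx E p| ≤ C0 * layerY ε p.2 := by
  simpa [pd, layerY] using hE.2 1 0 (by norm_num) p hp

theorem BoundE2.abs_pdy_le (hε : 0 ≤ ε) (hE : BoundE2 ε C0 E) (hp : p ∈ UnitSq) :
    |pdy E p| ≤ C0 * ((√ε)⁻¹ * layerY ε p.2) := by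
  simpa [pd, layerY, mul_assoc, rpow_div_two_eq_sqrt _ hε, rpow_neg_one] using
    hE.2 0 1 (by norm_num) p hp

theorem BoundE12.abs_le (hC0 : 0 ≤ C0) (hE : BoundE12 ε β C0 E) (hp : p ∈ UnitSq) :
    |E p| ≤ 2 * C0 * layerX β ε p.1 := by
  have h : |E p| ≤ C0 * layerX β ε p.1 * layerY ε p.2 := by
    simpa [pd, layerX, layerY] using hE.2 0 0 (by norm_num) p hp
  nlinarith [layerY_le_two (ε := ε) hp.2, mul_nonneg hC0 (layerX_pos β ε p.1).le]

theorem BoundE12.abs_pdx_le (hC0 : 0 ≤ C0) (hε : 0 ≤ ε) (hE : BoundE12 ε β C0 E)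
    (hp : p ∈ UnitSq) : |pdx E p| ≤ 2 * C0 * (ε⁻¹ * layerX β ε p.1) := by
  have h : |pdx E p| ≤ C0 * ε⁻¹ * layerX β ε p.1 * layerY ε p.2 := by
    simpa [pd, layerX, layerY, rpow_neg_one] using hE.2 1 0 (by norm_num) p hp
  nlinarith [layerY_le_two (ε := ε) hp.2,
    mul_nonneg (mul_nonneg hC0 (inv_nonneg.2 hε)) (layerX_pos β ε p.1).le]

theorem BoundE12.abs_pdy_le (hC0 : 0 ≤ C0) (hβ : 0 ≤ β) (hε : 0 ≤ ε) (hE : BoundE12 ε β C0 E)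
    (hp : p ∈ UnitSq) : |pdy E p| ≤ C0 * ((√ε)⁻¹ * layerY ε p.2) := by
  have h : |pdy E p| ≤ C0 * (√ε)⁻¹ * layerX β ε p.1 * layerY ε p.2 := by
    simpa [pd, layerX, layerY, sqrt_eq_rpow, rpow_neg hε] using hE.2 0 1 (by norm_num) p hp
  nlinarith [layerX_le_one hβ hε hp.1.2,
    mul_nonneg (mul_nonneg hC0 (inv_nonneg.2 (sqrt_nonneg ε))) (layerY_pos ε p.2).le]

end LayerBounds

theorem IsMeshInterpolant.ae_abs_pdx_pdy_sub_le {N : ℕ} (hN : 0 < N) (h6 : 6 ∣ N) {lx ly : ℝ}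
    (hlx : lx ≤ 1 / 2) (hly : ly ≤ 1 / 4) {g gI : ℝ × ℝ → ℝ} {M : ℝ}
    (hI : IsMeshInterpolant N lx ly g gI) (hd : Differentiable ℝ g)
    (hg : ∀ q ∈ OmegaS lx ly, |g q| ≤ M) :
    ∀ᵐ p ∂volume.restrict (OmegaS lx ly),
      |pdx (fun q => g q - gI q) p| ≤ |pdx g p| + 2 * M * N ∧
        |pdy (fun q => g q - gI q) p| ≤ |pdy g p| + 2 * M * N := by
  filter_upwards [hI.ae_abs_pdx_pdy_le hN h6 hlx hly hg] with p ⟨hdI, hx, hy⟩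
  rw [pdx_fun_sub (hd p) hdI, pdy_fun_sub (hd p) hdI]
  exact ⟨(abs_sub _ _).trans (by linarith), (abs_sub _ _).trans (by linarith)⟩

theorem measurableSet_OmegaS (lx ly : ℝ) : MeasurableSet (OmegaS lx ly) :=
  measurableSet_Icc.prod measurableSet_Icc

section Components

variable {N : ℕ} {ε β lx ly C0 : ℝ} {E EI : ℝ × ℝ → ℝ}

theorem integral_abs_pdx_sub_interpolant_le_of_boundE1 (hC0 : 0 ≤ C0)
    (h : ShishkinHyp N ε β lx ly) (hE : BoundE1 ε β C0 E) (hI : IsMeshInterpolant N lx ly E EI) :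
    ∫ p in OmegaS lx ly, |pdx (fun q => E q - EI q) p|
      ≤ C0 * (β⁻¹ + 2) * (N : ℝ) ^ ((1 : ℝ) - 5 / 2) := by
  have ⟨hN, h6, hε, _, hβ, _, _, hlx, hly⟩ := h
  set R := (N : ℝ) ^ (-(5 / 2) : ℝ)
  have hM : ∀ q ∈ OmegaS lx ly, |E q| ≤ C0 * R := fun q hq =>
    (hE.abs_le (h.OmegaS_subset_unitSq hq)).trans
      (mul_le_mul_of_nonneg_left (h.layerX_le hq.1.2) hC0)
  have hae := hI.ae_abs_pdx_pdy_sub_le hN h6 hlx hly (hE.1.differentiable (by norm_num)) hM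
  have hRX : R ≤ R * N := h.rpow_neg_five_halves_mul_self ▸ h.rpow_neg_five_halves_le
  calc ∫ p in OmegaS lx ly, |pdx (fun q => E q - EI q) p|
      ≤ (∫ x in Icc 0 (1 - lx), C0 * (ε⁻¹ * layerX β ε x)) + (∫ _ in Icc ly (1 - ly), (0 : ℝ))
          + 2 * (C0 * R) * N := by
        refine setIntegral_Icc_prod_le (by linarith) (by linarith) (by linarith [h.lx_nonneg])
          (by linarith [h.ly_nonneg]) (by fun_prop) continuous_const
          (fun x => mul_nonneg hC0 (mul_nonneg (inv_nonneg.2 hε.le) (layerX_pos β ε x).le))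
          (fun _ => le_rfl) (by positivity) (fun _ => abs_nonneg _) ?_
        filter_upwards [hae, ae_restrict_mem (measurableSet_OmegaS lx ly)] with p hp hpΩ
        linarith [hp.1, hE.abs_pdx_le (h.OmegaS_subset_unitSq hpΩ)]
    _ ≤ C0 * (β⁻¹ * R) + 0 + 2 * (C0 * R) * N := by
        rw [integral_const_mul, integral_zero]
        gcongr
        exact h.integral_layerX_le
    _ ≤ C0 * (β⁻¹ + 2) * N ^ ((1 : ℝ) - 5 / 2) := by
        rw [← h.rpow_neg_five_halves_mul_self]
        nlinarith [mul_le_mul_of_nonneg_left hRX (mul_nonneg hC0 (inv_pos.2 hβ).le)]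

theorem integral_abs_grad_sub_interpolant_le_of_boundE2 (hC0 : 0 ≤ C0)
    (h : ShishkinHyp N ε β lx ly) (hE : BoundE2 ε C0 E) (hI : IsMeshInterpolant N lx ly E EI) :
    ∫ p in OmegaS lx ly, (|pdx (fun q => E q - EI q) p| + |pdy (fun q => E q - EI q) p|)
      ≤ C0 * 12 * (N : ℝ) ^ ((1 : ℝ) - 5 / 2) := by
  have ⟨hN, h6, hε, _, _, _, _, hlx, hly⟩ := h
  set R := (N : ℝ) ^ (-(5 / 2) : ℝ)
  have hM : ∀ q ∈ OmegaS lx ly, |E q| ≤ C0 * (2 * R) := fun q hq =>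
    (hE.abs_le (h.OmegaS_subset_unitSq hq)).trans
      (mul_le_mul_of_nonneg_left (h.layerY_le hq.2) hC0)
  have hae := hI.ae_abs_pdx_pdy_sub_le hN h6 hlx hly (hE.1.differentiable (by norm_num)) hM
  have hRX : R ≤ R * N := h.rpow_neg_five_halves_mul_self ▸ h.rpow_neg_five_halves_le
  calc ∫ p in OmegaS lx ly, (|pdx (fun q => E q - EI q) p| + |pdy (fun q => E q - EI q) p|)
      ≤ (∫ _ in Icc 0 (1 - lx), (0 : ℝ)) + (∫ y in Icc ly (1 - ly), C0 * ((√ε)⁻¹ * layerY ε y))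
          + (C0 * (2 * R) + 2 * (2 * (C0 * (2 * R)) * N)) := by
        refine setIntegral_Icc_prod_le (by linarith) (by linarith) (by linarith [h.lx_nonneg])
          (by linarith [h.ly_nonneg]) continuous_const (by fun_prop) (fun _ => le_rfl)
          (fun y => mul_nonneg hC0 (mul_nonneg (inv_nonneg.2 (sqrt_nonneg ε)) (layerY_pos ε y).le))
          (by positivity) (fun _ => by positivity) ?_
        filter_upwards [hae, ae_restrict_mem (measurableSet_OmegaS lx ly)] with p hp hpΩ
        have hpU := h.OmegaS_subset_unitSq hpΩ
        have hpdx : C0 * layerY ε p.2 ≤ C0 * (2 * R) :=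
          mul_le_mul_of_nonneg_left (h.layerY_le hpΩ.2) hC0
        linarith [hp.1, hp.2, hE.abs_pdx_le hpU, hE.abs_pdy_le hε.le hpU]
    _ ≤ 0 + C0 * (2 * R) + (C0 * (2 * R) + 2 * (2 * (C0 * (2 * R)) * N)) := by
        rw [integral_const_mul, integral_zero]
        gcongr
        exact h.integral_layerY_le
    _ ≤ C0 * 12 * N ^ ((1 : ℝ) - 5 / 2) := by
        rw [← h.rpow_neg_five_halves_mul_self]
        nlinarith [mul_le_mul_of_nonneg_left hRX hC0]

theorem integral_abs_grad_sub_interpolant_le_of_boundE12 (hC0 : 0 ≤ C0)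
    (h : ShishkinHyp N ε β lx ly) (hE : BoundE12 ε β C0 E) (hI : IsMeshInterpolant N lx ly E EI) :
    ∫ p in OmegaS lx ly, (|pdx (fun q => E q - EI q) p| + |pdy (fun q => E q - EI q) p|)
      ≤ C0 * (2 * β⁻¹ + 10) * (N : ℝ) ^ ((1 : ℝ) - 5 / 2) := by
  have ⟨hN, h6, hε, _, hβ, _, _, hlx, hly⟩ := h
  set R := (N : ℝ) ^ (-(5 / 2) : ℝ)
  have hM : ∀ q ∈ OmegaS lx ly, |E q| ≤ 2 * C0 * R := fun q hq =>
    (hE.abs_le hC0 (h.OmegaS_subset_unitSq hq)).trans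
      (mul_le_mul_of_nonneg_left (h.layerX_le hq.1.2) (by positivity))
  have hae := hI.ae_abs_pdx_pdy_sub_le hN h6 hlx hly (hE.1.differentiable (by norm_num)) hM
  have hRX : R ≤ R * N := h.rpow_neg_five_halves_mul_self ▸ h.rpow_neg_five_halves_le
  calc ∫ p in OmegaS lx ly, (|pdx (fun q => E q - EI q) p| + |pdy (fun q => E q - EI q) p|)
      ≤ (∫ x in Icc 0 (1 - lx), 2 * C0 * (ε⁻¹ * layerX β ε x))
          + (∫ y in Icc ly (1 - ly), C0 * ((√ε)⁻¹ * layerY ε y))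
          + 2 * (2 * (2 * C0 * R) * N) := by
        refine setIntegral_Icc_prod_le (by linarith) (by linarith) (by linarith [h.lx_nonneg])
          (by linarith [h.ly_nonneg]) (by fun_prop) (by fun_prop)
          (fun x => mul_nonneg (by positivity)
            (mul_nonneg (inv_nonneg.2 hε.le) (layerX_pos β ε x).le))
          (fun y => mul_nonneg hC0 (mul_nonneg (inv_nonneg.2 (sqrt_nonneg ε)) (layerY_pos ε y).le))
          (by positivity) (fun _ => by positivity) ?_
        filter_upwards [hae, ae_restrict_mem (measurableSet_OmegaS lx ly)] with p hp hpΩ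
        have hpU := h.OmegaS_subset_unitSq hpΩ
        linarith [hp.1, hp.2, hE.abs_pdx_le hC0 hε.le hpU, hE.abs_pdy_le hC0 hβ.le hε.le hpU]
    _ ≤ 2 * C0 * (β⁻¹ * R) + C0 * (2 * R) + 2 * (2 * (2 * C0 * R) * N) := by
        rw [integral_const_mul (2 * C0), integral_const_mul C0]
        gcongr
        exacts [h.integral_layerX_le, h.integral_layerY_le]
    _ ≤ C0 * (2 * β⁻¹ + 10) * N ^ ((1 : ℝ) - 5 / 2) := by
        rw [← h.rpow_neg_five_halves_mul_self]
        nlinarith [mul_le_mul_of_nonneg_left hRX (mul_nonneg hC0 (inv_pos.2 hβ).le),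
          mul_le_mul_of_nonneg_left hRX hC0]

end Components

/-- `‖(E₁ − E₁^I)_x‖_{L^1(Ω_s)} ≤ C N^{1−5/2}` and
`‖∇(E₂ − E₂^I)‖_{L^1(Ω_s)} + ‖∇(E₁₂ − E₁₂^I)‖_{L^1(Ω_s)} ≤ C N^{1−5/2}`, with derivatives of
the piecewise bilinear interpolants taken rectangle-by-rectangle. -/
theorem layer_grad_L1_OmegaS (β C0 : ℝ) (hβ : 0 < β) (hC0 : 0 < C0) :
    ∃ C : ℝ, 0 < C ∧
      ∀ (N : ℕ) (ε lx ly : ℝ) (E1 E2 E12 EI1 EI2 EI12 : ℝ × ℝ → ℝ),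
        ShishkinHyp N ε β lx ly →
        BoundE1 ε β C0 E1 → BoundE2 ε C0 E2 → BoundE12 ε β C0 E12 →
        IsMeshInterpolant N lx ly E1 EI1 →
        IsMeshInterpolant N lx ly E2 EI2 →
        IsMeshInterpolant N lx ly E12 EI12 →
        (∫ p in OmegaS lx ly, |pdx (fun q => E1 q - EI1 q) p|
          ≤ C * (N : ℝ) ^ ((1 : ℝ) - 5 / 2)) ∧
        ((∫ p in OmegaS lx ly,
            (|pdx (fun q => E2 q - EI2 q) p| + |pdy (fun q => E2 q - EI2 q) p|))
          + (∫ p in OmegaS lx ly,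
            (|pdx (fun q => E12 q - EI12 q) p| + |pdy (fun q => E12 q - EI12 q) p|))
          ≤ C * (N : ℝ) ^ ((1 : ℝ) - 5 / 2)) := by
  refine ⟨C0 * (2 * β⁻¹ + 22), by positivity, ?_⟩
  intro N ε lx ly E1 E2 E12 EI1 EI2 EI12 h hE1 hE2 hE12 hI1 hI2 hI12
  have hX : 0 ≤ (N : ℝ) ^ ((1 : ℝ) - 5 / 2) := by positivity
  have hβ' : 0 ≤ β⁻¹ := (inv_pos.2 hβ).le
  constructor
  · exact (integral_abs_pdx_sub_interpolant_le_of_boundE1 hC0.le h hE1 hI1).trans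
      (mul_le_mul_of_nonneg_right (mul_le_mul_of_nonneg_left (by linarith) hC0.le) hX)
  · calc _ ≤ C0 * 12 * (N : ℝ) ^ ((1 : ℝ) - 5 / 2)
          + C0 * (2 * β⁻¹ + 10) * (N : ℝ) ^ ((1 : ℝ) - 5 / 2) :=
          add_le_add (integral_abs_grad_sub_interpolant_le_of_boundE2 hC0.le h hE2 hI2)
            (integral_abs_grad_sub_interpolant_le_of_boundE12 hC0.le h hE12 hI12)
      _ = C0 * (2 * β⁻¹ + 22) * (N : ℝ) ^ ((1 : ℝ) - 5 / 2) := by ring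
end
end

section
/- Fix k > 0 and K > 0, let x* = (x*, y*) be a mesh node of the Shishkin mesh, set σ_x = kN^{-1}ln N, σ_y = kN^{-1/2}, Ω_0 = {(x,y) ∈ Ω : x − x* ≤ Kσ_x ln N and |y − y*| ≤ Kσ_y ln N}, and let Ω'_0 be the smallest union of mesh rectangles containing Ω_0. Then there exists a constant C, independent of ε, N and x*, such that ‖Δ(E_1 + E_12)‖_{L^1(Ω_s ∩ Ω'_0)} ≤ C ε^{-1} N^{-5/2} σ_y ln N. -/
open MeasureTheory Real Set

noncomputable section

/-!
On `Ω_s` the layer bounds give `|Δ(E₁ + E₁₂)| ≤ 6 C₀ ε⁻² e^{-β(1-x)/ε}`, and integrating this in `x`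
over `[0, 1 - λ_x]` costs at most `ε β⁻¹ e^{-βλ_x/ε} = ε β⁻¹ N^{-5/2}`. In `y`, every mesh rectangle
meeting `Ω₀` has height at most `3/N`, so `Ω₀'` lies in a strip of width
`2 (K σ_y ln N + 3/N) ≤ (2K + 6/k) σ_y ln N`.
-/

def planarLaplacian (f : ℝ × ℝ → ℝ) : ℝ × ℝ → ℝ := fun p => pd 2 0 f p + pd 0 2 f p

section PartialDerivatives

variable {f g : ℝ × ℝ → ℝ}

theorem ContDiff.pdx {n : WithTop ℕ∞} (hf : ContDiff ℝ (n + 1) f) : ContDiff ℝ n (pdx f) :=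
  (hf.fderiv_right le_rfl).clm_apply contDiff_const

theorem ContDiff.pdy {n : WithTop ℕ∞} (hf : ContDiff ℝ (n + 1) f) : ContDiff ℝ n (pdy f) :=
  (hf.fderiv_right le_rfl).clm_apply contDiff_const

theorem pdx_add (hf : Differentiable ℝ f) (hg : Differentiable ℝ g) :
    pdx (fun q => f q + g q) = fun q => pdx f q + pdx g q := by
  funext p
  simp [pdx, fderiv_fun_add (hf p) (hg p)]

theorem pdy_add (hf : Differentiable ℝ f) (hg : Differentiable ℝ g) :
    pdy (fun q => f q + g q) = fun q => pdy f q + pdy g q := by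
  funext p
  simp [pdy, fderiv_fun_add (hf p) (hg p)]

theorem planarLaplacian_add (hf : ContDiff ℝ 2 f) (hg : ContDiff ℝ 2 g) :
    planarLaplacian (fun q => f q + g q) =
      fun q => planarLaplacian f q + planarLaplacian g q := by
  have hxx : pd 2 0 (fun q => f q + g q) = fun q => pd 2 0 f q + pd 2 0 g q := by
    simp only [pd, Function.iterate_zero, id, Function.iterate_succ, Function.comp]
    rw [pdx_add (hf.differentiable two_ne_zero) (hg.differentiable two_ne_zero),
      pdx_add (hf.pdx.differentiable one_ne_zero) (hg.pdx.differentiable one_ne_zero)]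
  have hyy : pd 0 2 (fun q => f q + g q) = fun q => pd 0 2 f q + pd 0 2 g q := by
    simp only [pd, Function.iterate_zero, id, Function.iterate_succ, Function.comp]
    rw [pdy_add (hf.differentiable two_ne_zero) (hg.differentiable two_ne_zero),
      pdy_add (hf.pdy.differentiable one_ne_zero) (hg.pdy.differentiable one_ne_zero)]
  funext q
  simp only [planarLaplacian, hxx, hyy]
  ring

theorem ContDiff.continuous_planarLaplacian (hf : ContDiff ℝ 2 f) :
    Continuous (planarLaplacian f) :=
  ((hf.pdx (n := 1)).pdx (n := 0)).continuous.add ((hf.pdy (n := 1)).pdy (n := 0)).continuous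

end PartialDerivatives

theorem inv_le_rpow_neg_half_mul_log {x : ℝ} (hx : Real.exp 1 ≤ x) :
    x⁻¹ ≤ x ^ (-(1 / 2 : ℝ)) * Real.log x := by
  have hx₁ : 1 ≤ x := le_trans (by simp) hx
  have hlog : 1 ≤ Real.log x := by rwa [Real.le_log_iff_exp_le (by linarith)]
  calc x⁻¹ = x ^ (-1 : ℝ) := (Real.rpow_neg_one x).symm
    _ ≤ x ^ (-(1 / 2 : ℝ)) := Real.rpow_le_rpow_of_exponent_le hx₁ (by norm_num)
    _ ≤ x ^ (-(1 / 2 : ℝ)) * Real.log x :=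
        le_mul_of_one_le_right (Real.rpow_nonneg (by linarith) _) hlog

theorem setIntegral_Icc_exp_layer_le {β ε : ℝ} (hβ : 0 < β) (hε : 0 < ε) (a X : ℝ) :
    ∫ x in Icc a X, Real.exp (-β * (1 - x) / ε) ≤ ε / β * Real.exp (-β * (1 - X) / ε) := by
  have hc : 0 < β / ε := div_pos hβ hε
  have hsplit : ∀ x, Real.exp (-β * (1 - x) / ε) = Real.exp (-(β / ε)) * Real.exp (β / ε * x) :=
    fun x => by rw [← Real.exp_add]; ring_nf
  simp_rw [hsplit]
  calc ∫ x in Icc a X, Real.exp (-(β / ε)) * Real.exp (β / ε * x)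
      ≤ ∫ x in Iic X, Real.exp (-(β / ε)) * Real.exp (β / ε * x) :=
        setIntegral_mono_set ((integrableOn_exp_mul_Iic hc X).const_mul _)
          (ae_of_all _ fun x => by positivity) Icc_subset_Iic_self.eventuallyLE
    _ = ε / β * (Real.exp (-(β / ε)) * Real.exp (β / ε * X)) := by
        rw [integral_const_mul, integral_exp_mul_Iic hc]
        field_simp

section ShishkinMesh

variable {N : ℕ} {ly : ℝ}

theorem meshY_of_le_third {j : ℕ} (hj : j ≤ N / 3) : meshY N ly j = 3 * j * ly / N := by
  rw [meshY, if_pos hj]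

theorem meshY_of_mem_middle (hN : 0 < N) (h3 : 3 ∣ N) {j : ℕ} (hj₁ : N / 3 ≤ j)
    (hj₂ : j ≤ 2 * N / 3) :
    meshY N ly j = (3 * j / N - 1) - 3 * (2 * j - N) * ly / N := by
  obtain ⟨n, rfl⟩ := h3
  have hn : (0 : ℝ) < n := by exact_mod_cast (by omega : 0 < n)
  rcases (by omega : j = n ∨ n + 1 ≤ j) with rfl | hj
  · rw [meshY, if_pos (by omega)]
    push_cast
    field_simp
    ring
  · rw [meshY, if_neg (by omega), if_pos hj₂]

theorem meshY_of_two_thirds_le (hN : 0 < N) (h3 : 3 ∣ N) {j : ℕ} (hj : 2 * N / 3 ≤ j) :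
    meshY N ly j = 1 - 3 * (N - j) * ly / N := by
  obtain ⟨n, rfl⟩ := h3
  have hn : (0 : ℝ) < n := by exact_mod_cast (by omega : 0 < n)
  rcases (by omega : j = 2 * n ∨ 2 * n + 1 ≤ j) with rfl | hj
  · rw [meshY, if_neg (by omega), if_pos (by omega)]
    push_cast
    field_simp
    ring
  · rw [meshY, if_neg (by omega), if_neg (by omega)]

theorem meshY_succ_sub_le (hN : 0 < N) (h3 : 3 ∣ N) (hly₀ : 0 ≤ ly) (hly₁ : ly ≤ 1) (j : ℕ) :
    meshY N ly (j + 1) - meshY N ly j ≤ 3 / N := by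
  have hNR : (0 : ℝ) < N := by exact_mod_cast hN
  rcases (by omega : j + 1 ≤ N / 3 ∨ (N / 3 ≤ j ∧ j + 1 ≤ 2 * N / 3) ∨ 2 * N / 3 ≤ j)
    with hj | ⟨hj₁, hj₂⟩ | hj
  · rw [meshY_of_le_third hj, meshY_of_le_third (by omega), div_sub_div_same,
      div_le_div_iff_of_pos_right hNR]
    push_cast
    linarith
  · rw [meshY_of_mem_middle hN h3 (by omega) hj₂, meshY_of_mem_middle hN h3 hj₁ (by omega)]
    rw [show (3 * ((j + 1 : ℕ) : ℝ) / N - 1) - 3 * (2 * ((j + 1 : ℕ) : ℝ) - N) * ly / N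
      - ((3 * j / N - 1) - 3 * (2 * j - N) * ly / N) = 3 / N - 6 * ly / N by push_cast; ring]
    have : 0 ≤ 6 * ly / N := by positivity
    linarith
  · rw [meshY_of_two_thirds_le hN h3 (by omega), meshY_of_two_thirds_le hN h3 hj]
    rw [show (1 : ℝ) - 3 * (N - ((j + 1 : ℕ) : ℝ)) * ly / N - (1 - 3 * (N - j) * ly / N)
      = 3 * ly / N by push_cast; ring]
    gcongr
    linarith

theorem abs_snd_sub_le_of_mem_omegaZero' {lx xs ys K sx sy : ℝ} (hN : 0 < N)
    (h3 : 3 ∣ N) (hly₀ : 0 ≤ ly) (hly₁ : ly ≤ 1) {p : ℝ × ℝ}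
    (hp : p ∈ OmegaZero' N lx ly xs ys K sx sy) :
    |p.2 - ys| ≤ K * sy * Real.log N + 3 / N := by
  simp only [OmegaZero', mem_iUnion, Finset.mem_Icc] at hp
  obtain ⟨i, -, j, hj, hvol, hpτ⟩ := hp
  obtain ⟨q, hqΩ, hqτ⟩ := nonempty_of_measure_ne_zero hvol
  obtain ⟨j, rfl⟩ : ∃ j', j = j' + 1 := ⟨j - 1, by omega⟩
  have hq := abs_le.mp hqΩ.2.2
  have hp₂ := hpτ.2
  have hq₂ := hqτ.2
  simp only [add_tsub_cancel_right, mem_Icc] at hp₂ hq₂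
  have hspacing := meshY_succ_sub_le hN h3 hly₀ hly₁ (ly := ly) j
  rw [abs_le]
  constructor <;> linarith

theorem omegaS_inter_omegaZero'_subset {lx xs ys K sx sy : ℝ} (hN : 0 < N)
    (h3 : 3 ∣ N) (hly₀ : 0 ≤ ly) (hly₁ : ly ≤ 1) :
    OmegaS lx ly ∩ OmegaZero' N lx ly xs ys K sx sy ⊆
      Icc 0 (1 - lx) ×ˢ (Icc ly (1 - ly) ∩
        Icc (ys - (K * sy * Real.log N + 3 / N)) (ys + (K * sy * Real.log N + 3 / N))) := by
  rintro p ⟨⟨hp₁, hp₂⟩, hpΩ⟩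
  have hy := abs_le.mp (abs_snd_sub_le_of_mem_omegaZero' hN h3 hly₀ hly₁ hpΩ)
  exact ⟨hp₁, hp₂, by linarith [hy.1], by linarith [hy.2]⟩

theorem exp_neg_mul_div_shishkin_transition {ε β : ℝ} (hN : 0 < N) (hε : 0 < ε)
    (hβ : 0 < β) :
    Real.exp (-β * (2.5 * ε / β * Real.log N) / ε) = (N : ℝ) ^ (-(5 / 2 : ℝ)) := by
  rw [Real.rpow_def_of_pos (by exact_mod_cast hN)]
  congr 1
  field_simp
  ring

theorem volume_real_Icc_layer_window_le {k K : ℝ} (hk : 0 < k) (hK : 0 ≤ K)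
    (hN : 6 ≤ (N : ℝ)) (ys : ℝ) :
    let w := K * (k * (N : ℝ) ^ (-(1 / 2 : ℝ))) * Real.log N + 3 / N
    volume.real (Icc (ys - w) (ys + w)) ≤
      (2 * K + 6 / k) * (k * (N : ℝ) ^ (-(1 / 2 : ℝ)) * Real.log N) := by
  intro w
  have hinv := inv_le_rpow_neg_half_mul_log (x := N) (by linarith [Real.exp_one_lt_d9])
  have hlog : 0 ≤ Real.log N := Real.log_nonneg (by linarith)
  rw [Real.volume_real_Icc]
  refine max_le ?_ (by positivity)
  calc ys + w - (ys - w)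
      = 2 * K * (k * (N : ℝ) ^ (-(1 / 2 : ℝ)) * Real.log N) + 6 * (N : ℝ)⁻¹ := by ring
    _ ≤ 2 * K * (k * (N : ℝ) ^ (-(1 / 2 : ℝ)) * Real.log N)
        + 6 / k * (k * (N : ℝ) ^ (-(1 / 2 : ℝ)) * Real.log N) := by
        rw [show 6 / k * (k * (N : ℝ) ^ (-(1 / 2 : ℝ)) * Real.log N)
          = 6 * ((N : ℝ) ^ (-(1 / 2 : ℝ)) * Real.log N) by field_simp]
        linarith
    _ = (2 * K + 6 / k) * (k * (N : ℝ) ^ (-(1 / 2 : ℝ)) * Real.log N) := by ring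

end ShishkinMesh

section LayerEstimates

variable {ε β C0 : ℝ} {E1 E12 : ℝ × ℝ → ℝ}

theorem abs_planarLaplacian_add_le (hC0 : 0 ≤ C0) (hε : 0 < ε) (hε₁ : ε ≤ 1)
    (hE1 : BoundE1 ε β C0 E1) (hE12 : BoundE12 ε β C0 E12) {p : ℝ × ℝ} (hp : p ∈ UnitSq) :
    |planarLaplacian (fun q => E1 q + E12 q) p| ≤
      6 * C0 / ε ^ 2 * Real.exp (-β * (1 - p.1) / ε) := by
  have hxx1 := hE1.2 2 0 (by norm_num) p hp
  have hyy1 := hE1.2 0 2 (by norm_num) p hp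
  have hxx12 := hE12.2 2 0 (by norm_num) p hp
  have hyy12 := hE12.2 0 2 (by norm_num) p hp
  norm_num only [Nat.cast_ofNat, Nat.cast_zero] at hxx1 hyy1 hxx12 hyy12
  set e := Real.exp (-β * (1 - p.1) / ε)
  set w := Real.exp (-p.2 / √ε) + Real.exp (-(1 - p.2) / √ε)
  have he : 0 ≤ e := (Real.exp_pos _).le
  have hw : w ≤ 2 := by
    have hp₂ := hp.2
    have hsqrt := Real.sqrt_pos.mpr hε
    have h₁ : Real.exp (-p.2 / √ε) ≤ 1 :=
      Real.exp_le_one_iff.mpr (div_nonpos_of_nonpos_of_nonneg (by linarith [hp₂.1]) hsqrt.le)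
    have h₂ : Real.exp (-(1 - p.2) / √ε) ≤ 1 :=
      Real.exp_le_one_iff.mpr (div_nonpos_of_nonpos_of_nonneg (by linarith [hp₂.2]) hsqrt.le)
    linarith
  have hw₀ : 0 ≤ w := by positivity
  have hpow : ∀ a : ℝ, a ≤ 2 → C0 * ε ^ (-a) ≤ C0 * ε ^ (-2 : ℝ) := fun a ha =>
    mul_le_mul_of_nonneg_left (Real.rpow_le_rpow_of_exponent_ge hε hε₁ (by linarith)) hC0
  have hyy1' : |pd 0 2 E1 p| ≤ C0 * ε ^ (-2 : ℝ) * e :=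
    hyy1.trans (mul_le_mul_of_nonneg_right (by simpa using hpow 0 (by norm_num)) he)
  have hyy12' : |pd 0 2 E12 p| ≤ C0 * ε ^ (-2 : ℝ) * e * w :=
    hyy12.trans <| mul_le_mul_of_nonneg_right
      (mul_le_mul_of_nonneg_right (hpow 1 (by norm_num)) he) hw₀
  have hD : C0 * ε ^ (-2 : ℝ) = C0 / ε ^ 2 := by
    rw [Real.rpow_neg hε.le, ← div_eq_mul_inv]
    norm_cast
  calc |planarLaplacian (fun q => E1 q + E12 q) p|
      ≤ |pd 2 0 E1 p| + |pd 0 2 E1 p| + (|pd 2 0 E12 p| + |pd 0 2 E12 p|) := by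
        rw [planarLaplacian_add (hE1.1.of_le (by norm_num)) (hE12.1.of_le (by norm_num))]
        exact (abs_add_le _ _).trans (add_le_add (abs_add_le _ _) (abs_add_le _ _))
    _ ≤ C0 * ε ^ (-2 : ℝ) * e * (2 + 2 * w) := by linarith
    _ ≤ 6 * C0 / ε ^ 2 * e := by
        rw [hD, mul_div_assoc]
        have : 0 ≤ C0 / ε ^ 2 * e := by positivity
        nlinarith

theorem setIntegral_abs_planarLaplacian_add_le (hC0 : 0 ≤ C0) (hβ : 0 < β) (hε : 0 < ε)
    (hε₁ : ε ≤ 1) (hE1 : BoundE1 ε β C0 E1) (hE12 : BoundE12 ε β C0 E12)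
    {s : Set (ℝ × ℝ)} {X : ℝ} {t : Set ℝ} (hX : X ≤ 1) (ht : t ⊆ Icc 0 1) (htm : MeasurableSet t)
    (hs : s ⊆ Icc 0 X ×ˢ t) :
    ∫ p in s, |planarLaplacian (fun q => E1 q + E12 q) p| ≤
      6 * C0 / (β * ε) * Real.exp (-β * (1 - X) / ε) * volume.real t := by
  set R := Icc 0 X ×ˢ t
  have hRU : R ⊆ UnitSq := prod_mono (Icc_subset_Icc_right hX) ht
  have hcont : Continuous fun p => |planarLaplacian (fun q => E1 q + E12 q) p| :=
    ((hE1.1.add hE12.1).of_le (by norm_num)).continuous_planarLaplacian.abs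
  have hint : IntegrableOn (fun p => |planarLaplacian (fun q => E1 q + E12 q) p|) R :=
    (hcont.continuousOn.integrableOn_compact (isCompact_Icc.prod isCompact_Icc)).mono_set hRU
  have hmaj : IntegrableOn (fun p : ℝ × ℝ => 6 * C0 / ε ^ 2 * Real.exp (-β * (1 - p.1) / ε)) R :=
    (Continuous.continuousOn (by fun_prop)).integrableOn_compact
      (isCompact_Icc.prod isCompact_Icc) |>.mono_set hRU
  calc ∫ p in s, |planarLaplacian (fun q => E1 q + E12 q) p|
      ≤ ∫ p in R, |planarLaplacian (fun q => E1 q + E12 q) p| :=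
        setIntegral_mono_set hint (ae_of_all _ fun _ => abs_nonneg _) hs.eventuallyLE
    _ ≤ ∫ p in R, 6 * C0 / ε ^ 2 * Real.exp (-β * (1 - p.1) / ε) :=
        setIntegral_mono_on hint hmaj (measurableSet_Icc.prod htm) fun p hp =>
          abs_planarLaplacian_add_le hC0 hε hε₁ hE1 hE12 (hRU hp)
    _ = (6 * C0 / ε ^ 2 * ∫ x in Icc 0 X, Real.exp (-β * (1 - x) / ε)) * volume.real t := by
        have := setIntegral_prod_mul (μ := volume) (ν := volume)
          (fun x : ℝ => 6 * C0 / ε ^ 2 * Real.exp (-β * (1 - x) / ε)) (fun _ : ℝ => (1 : ℝ))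
          (Icc 0 X) t
        simp only [mul_one, ← Measure.volume_eq_prod] at this
        rw [this, integral_const_mul, setIntegral_const, smul_eq_mul, mul_one]
    _ ≤ (6 * C0 / ε ^ 2 * (ε / β * Real.exp (-β * (1 - X) / ε))) * volume.real t := by
        gcongr
        exact setIntegral_Icc_exp_layer_le hβ hε 0 X
    _ = 6 * C0 / (β * ε) * Real.exp (-β * (1 - X) / ε) * volume.real t := by
        field_simp

end LayerEstimates

/-- Local `L¹` bound for the Laplacian of the exponential-layer parts:
`‖Δ(E₁ + E₁₂)‖_{L¹(Ω_s ∩ Ω₀')} ≤ C ε⁻¹ N^{-5/2} σ_y ln N`. -/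
theorem local_L1_laplacian_estimate (β C0 k K : ℝ)
    (hβ : 0 < β) (hC0 : 0 < C0) (hk : 0 < k) (hK : 0 < K) :
    ∃ C : ℝ, 0 < C ∧
      ∀ (N : ℕ) (ε lx ly : ℝ) (i0 j0 : ℕ) (E1 E12 : ℝ × ℝ → ℝ) (xs ys sx sy : ℝ),
        ShishkinHyp N ε β lx ly →
        i0 ≤ N → j0 ≤ N →
        xs = meshX N lx i0 → ys = meshY N ly j0 →
        sx = k * (N : ℝ)⁻¹ * Real.log (N : ℝ) → sy = k * (N : ℝ) ^ (-(1 / 2 : ℝ)) →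
        BoundE1 ε β C0 E1 → BoundE12 ε β C0 E12 →
        ∫ p in OmegaS lx ly ∩ OmegaZero' N lx ly xs ys K sx sy,
            |pd 2 0 (fun q => E1 q + E12 q) p + pd 0 2 (fun q => E1 q + E12 q) p|
          ≤ C * ε⁻¹ * (N : ℝ) ^ (-(5 / 2 : ℝ)) * sy * Real.log (N : ℝ) := by
  refine ⟨6 * C0 / β * (2 * K + 6 / k), by positivity, ?_⟩
  intro N ε lx ly i0 j0 E1 E12 xs ys sx sy hSh _ _ _ _ _ hsy hE1 hE12
  obtain ⟨hN, h6, hε, hεN, -, hlx, hly, -, hly₄⟩ := hSh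
  subst hsy
  have hN6 : (6 : ℝ) ≤ N := by exact_mod_cast Nat.le_of_dvd hN h6
  have hε₁ : ε ≤ 1 := hεN.trans (inv_le_one_of_one_le₀ (by linarith))
  have hlx₀ : 0 ≤ lx := hlx ▸ by positivity
  have hly₀ : 0 ≤ ly := hly ▸ by positivity
  calc _ ≤ _ := setIntegral_abs_planarLaplacian_add_le hC0.le hβ hε hε₁ hE1 hE12
        (by linarith) (inter_subset_left.trans (Icc_subset_Icc hly₀ (by linarith)))
        (measurableSet_Icc.inter measurableSet_Icc)
        (omegaS_inter_omegaZero'_subset hN ((Nat.dvd_mul_left 3 2).trans h6) hly₀ (by linarith))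
    _ ≤ 6 * C0 / (β * ε) * (N : ℝ) ^ (-(5 / 2 : ℝ)) *
        ((2 * K + 6 / k) * (k * (N : ℝ) ^ (-(1 / 2 : ℝ)) * Real.log N)) := by
      rw [sub_sub_cancel, hlx, exp_neg_mul_div_shishkin_transition hN hε hβ]
      gcongr
      exact (measureReal_mono inter_subset_right measure_Icc_lt_top.ne).trans
        (volume_real_Icc_layer_window_le hk hK.le hN6 ys)
    _ = _ := by
      field_simp
end
end
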